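/- Consider a streaming least-squares setup satisfying the stability hypotheses with parameters κ, δ, θ, λ, where δ ∈ [0,1) and 0 ≤ θ < (1−δ)/2, and set ε = (1+δ)/2 − √((1−δ)²/4 − θ²). Then for all integers K ≥ k ≥ ℓ ≥ 0, ‖α_{k−ℓ|K+1} − α_{k−ℓ|K}‖₂ ≤ (θ/(1−ε))^ℓ · ‖α_{k|K+1} − α_{k|K}‖₂. -/

import Mathlib

/-!
For `j < K` the estimates `α_{j|K}` and `α_{j|K+1}` come from the same backward step
`α_j = v_j − U_j α_{j+1}`, so their difference obeys `Δ_j = −U_j Δ_{j+1}` and it suffices to show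
`‖U_k‖ ≤ θ/(1−ε)`. The bound on `D_k − κI` makes `D_k` coercive with constant `κ(1−δ)`, and the
Schur-complement step turns a coercivity constant `c` of `Q_k` into the constant
`κ(1−δ) − (κθ)²/c` of `Q_{k+1} = D_{k+1} − E_k Q_k⁻¹ E_kᵀ`. Since `ε` is the smaller root of
`(t − δ)(1 − t) = θ²`, the constant `κ(1−ε)` is a fixed point of this map, so every `Q_k` is
coercive with constant `κ(1−ε)` and `‖U_k‖ = ‖Q_k⁻¹ E_kᵀ‖ ≤ κθ / (κ(1−ε))`.
-/

open Matrix

/-- Euclidean (ℓ²) norm of a vector in ℝ^n. -/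
noncomputable def vecNorm {n : Type*} [Fintype n] (v : n → ℝ) : ℝ :=
  Real.sqrt (∑ i, v i ^ 2)

/-- Spectral norm (largest singular value) of a real matrix, defined as the operator
norm: the supremum of `‖A x‖₂` over unit vectors `x`. -/
noncomputable def matSpectralNorm {m n : Type*} [Fintype m] [Fintype n]
    (A : Matrix m n ℝ) : ℝ :=
  sSup ((fun x => vecNorm (A.mulVec x)) '' {x | vecNorm x = 1})

/-- Smallest eigenvalue of a real symmetric matrix, via the Rayleigh quotient. -/
noncomputable def eigMin {n : Type*} [Fintype n] (S : Matrix n n ℝ) : ℝ :=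
  sInf ((fun x => x ⬝ᵥ S.mulVec x) '' {x | vecNorm x = 1})

section Streaming

variable {N : ℕ} {M : ℕ → ℕ}

/-- `D_k = A_kᵀ A_k + B_{k+1}ᵀ B_{k+1} + λ_k I`. -/
noncomputable def Dmat (A B : ∀ k : ℕ, Matrix (Fin (M k)) (Fin N) ℝ) (lam : ℕ → ℝ)
    (k : ℕ) : Matrix (Fin N) (Fin N) ℝ :=
  (A k)ᵀ * A k + (B (k + 1))ᵀ * B (k + 1) + lam k • 1

/-- `E_k = A_{k+1}ᵀ B_{k+1}`. -/
noncomputable def Emat (A B : ∀ k : ℕ, Matrix (Fin (M k)) (Fin N) ℝ) (k : ℕ) :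
    Matrix (Fin N) (Fin N) ℝ :=
  (A (k + 1))ᵀ * B (k + 1)

/-- `D_k' = A_kᵀ A_k + λ_k I`. -/
noncomputable def Dmat' (A : ∀ k : ℕ, Matrix (Fin (M k)) (Fin N) ℝ) (lam : ℕ → ℝ)
    (k : ℕ) : Matrix (Fin N) (Fin N) ℝ :=
  (A k)ᵀ * A k + lam k • 1

/-- `Q₀ = D₀`, `Q_{k+1} = D_{k+1} − E_k U_k` with `U_k = Q_k⁻¹ E_kᵀ`. -/
noncomputable def Qmat (A B : ∀ k : ℕ, Matrix (Fin (M k)) (Fin N) ℝ) (lam : ℕ → ℝ) :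
    ℕ → Matrix (Fin N) (Fin N) ℝ
  | 0 => Dmat A B lam 0
  | k + 1 => Dmat A B lam (k + 1) - Emat A B k * ((Qmat A B lam k)⁻¹ * (Emat A B k)ᵀ)

/-- `U_k = Q_k⁻¹ E_kᵀ`. -/
noncomputable def Umat (A B : ∀ k : ℕ, Matrix (Fin (M k)) (Fin N) ℝ) (lam : ℕ → ℝ)
    (k : ℕ) : Matrix (Fin N) (Fin N) ℝ :=
  (Qmat A B lam k)⁻¹ * (Emat A B k)ᵀ

/-- `Q₀' = D₀'`, `Q_k' = D_k' − E_{k−1} U_{k−1}` for `k ≥ 1`. -/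
noncomputable def Qmat' (A B : ∀ k : ℕ, Matrix (Fin (M k)) (Fin N) ℝ) (lam : ℕ → ℝ) :
    ℕ → Matrix (Fin N) (Fin N) ℝ
  | 0 => Dmat' A lam 0
  | k + 1 => Dmat' A lam (k + 1) - Emat A B k * Umat A B lam k

/-- `w_k = A_kᵀ y_k + B_{k+1}ᵀ y_{k+1}`. -/
noncomputable def wvec (A B : ∀ k : ℕ, Matrix (Fin (M k)) (Fin N) ℝ)
    (y : ∀ k : ℕ, Fin (M k) → ℝ) (k : ℕ) : Fin N → ℝ :=
  (A k)ᵀ.mulVec (y k) + (B (k + 1))ᵀ.mulVec (y (k + 1))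

/-- `w_k' = A_kᵀ y_k`. -/
noncomputable def wvec' (A : ∀ k : ℕ, Matrix (Fin (M k)) (Fin N) ℝ)
    (y : ∀ k : ℕ, Fin (M k) → ℝ) (k : ℕ) : Fin N → ℝ :=
  (A k)ᵀ.mulVec (y k)

/-- `v₀ = Q₀⁻¹ w₀`, `v_k = Q_k⁻¹ (w_k − E_{k−1} v_{k−1})` for `k ≥ 1`. -/
noncomputable def vvec (A B : ∀ k : ℕ, Matrix (Fin (M k)) (Fin N) ℝ) (lam : ℕ → ℝ)
    (y : ∀ k : ℕ, Fin (M k) → ℝ) : ℕ → Fin N → ℝ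
  | 0 => (Qmat A B lam 0)⁻¹.mulVec (wvec A B y 0)
  | k + 1 => (Qmat A B lam (k + 1))⁻¹.mulVec
      (wvec A B y (k + 1) - (Emat A B k).mulVec (vvec A B lam y k))

/-- `v₀' = Q₀'⁻¹ w₀'`, `v_K' = Q_K'⁻¹ (w_K' − E_{K−1} v_{K−1})` for `K ≥ 1`. -/
noncomputable def vvec' (A B : ∀ k : ℕ, Matrix (Fin (M k)) (Fin N) ℝ) (lam : ℕ → ℝ)
    (y : ∀ k : ℕ, Fin (M k) → ℝ) : ℕ → Fin N → ℝ
  | 0 => (Qmat' A B lam 0)⁻¹.mulVec (wvec' A y 0)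
  | K + 1 => (Qmat' A B lam (K + 1))⁻¹.mulVec
      (wvec' A y (K + 1) - (Emat A B K).mulVec (vvec A B lam y K))

/-- Backward recursion producing the streaming least-squares estimates, indexed by the
lag `l = K − k`: `alphaAux K 0 = v_K'` and `alphaAux K (l+1) = v_{K−l−1} − U_{K−l−1} ·
alphaAux K l`. -/
noncomputable def alphaAux (A B : ∀ k : ℕ, Matrix (Fin (M k)) (Fin N) ℝ) (lam : ℕ → ℝ)
    (y : ∀ k : ℕ, Fin (M k) → ℝ) (K : ℕ) : ℕ → Fin N → ℝ
  | 0 => vvec' A B lam y K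
  | l + 1 => vvec A B lam y (K - (l + 1)) -
      (Umat A B lam (K - (l + 1))).mulVec (alphaAux A B lam y K l)

/-- The streaming least-squares estimate `α_{k|K}` (for `0 ≤ k ≤ K`): it satisfies
`α_{K|K} = v_K'` and `α_{k|K} = v_k − U_k α_{k+1|K}` for `k < K`. -/
noncomputable def alphaEst (A B : ∀ k : ℕ, Matrix (Fin (M k)) (Fin N) ℝ) (lam : ℕ → ℝ)
    (y : ∀ k : ℕ, Fin (M k) → ℝ) (k K : ℕ) : Fin N → ℝ :=
  alphaAux A B lam y K (K - k)

end Streaming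

open scoped Matrix.Norms.L2Operator

section EuclideanNorm

variable {m n : Type*} [Fintype m] [Fintype n]

theorem vecNorm_eq_norm_toLp (v : n → ℝ) : vecNorm v = ‖WithLp.toLp 2 v‖ := by
  simp [vecNorm, EuclideanSpace.norm_eq]

theorem vecNorm_nonneg (v : n → ℝ) : 0 ≤ vecNorm v :=
  Real.sqrt_nonneg _

theorem vecNorm_eq_zero {v : n → ℝ} : vecNorm v = 0 ↔ v = 0 := by
  simp [vecNorm_eq_norm_toLp]

theorem vecNorm_smul (c : ℝ) (v : n → ℝ) : vecNorm (c • v) = |c| * vecNorm v := by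
  simp [vecNorm_eq_norm_toLp, WithLp.toLp_smul, norm_smul]

theorem vecNorm_neg (v : n → ℝ) : vecNorm (-v) = vecNorm v := by
  simp [vecNorm_eq_norm_toLp]

theorem dotProduct_self_eq_vecNorm_sq (v : n → ℝ) : v ⬝ᵥ v = vecNorm v ^ 2 := by
  rw [vecNorm_eq_norm_toLp, ← real_inner_self_eq_norm_sq, EuclideanSpace.inner_toLp_toLp,
    star_trivial]

theorem abs_dotProduct_le_vecNorm_mul (v w : n → ℝ) : |v ⬝ᵥ w| ≤ vecNorm v * vecNorm w := by
  rw [vecNorm_eq_norm_toLp, vecNorm_eq_norm_toLp, dotProduct_comm, ← star_trivial v,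
    ← EuclideanSpace.inner_toLp_toLp]
  exact abs_real_inner_le_norm _ _

theorem vecNorm_mulVec_le_l2_opNorm [DecidableEq n] (A : Matrix m n ℝ) (x : n → ℝ) :
    vecNorm (A *ᵥ x) ≤ ‖A‖ * vecNorm x := by
  simpa [vecNorm_eq_norm_toLp] using A.l2_opNorm_mulVec (WithLp.toLp 2 x)

end EuclideanNorm

section SpectralNorm

variable {m n : Type*} [Fintype m] [Fintype n] [DecidableEq n]

theorem vecNorm_mulVec_le_of_matSpectralNorm_le {A : Matrix m n ℝ} {c : ℝ}
    (h : matSpectralNorm A ≤ c) (x : n → ℝ) : vecNorm (A *ᵥ x) ≤ c * vecNorm x := by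
  rcases eq_or_ne x 0 with rfl | hx
  · simp [vecNorm_eq_zero.mpr rfl]
  have hx0 : 0 < vecNorm x := (vecNorm_nonneg x).lt_of_ne' (vecNorm_eq_zero.not.mpr hx)
  set u := (vecNorm x)⁻¹ • x
  have hu : vecNorm u = 1 := by
    rw [vecNorm_smul, abs_inv, abs_of_pos hx0, inv_mul_cancel₀ hx0.ne']
  have hbdd : BddAbove ((fun z => vecNorm (A *ᵥ z)) '' {z | vecNorm z = 1}) := by
    refine ⟨‖A‖, ?_⟩
    rintro _ ⟨z, hz : vecNorm z = 1, rfl⟩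
    simpa [hz] using vecNorm_mulVec_le_l2_opNorm A z
  have hAu : vecNorm (A *ᵥ u) ≤ c := (le_csSup hbdd ⟨u, hu, rfl⟩).trans h
  have hAx : A *ᵥ x = vecNorm x • A *ᵥ u := by
    rw [Matrix.mulVec_smul, smul_smul, mul_inv_cancel₀ hx0.ne', one_smul]
  rw [hAx, vecNorm_smul, abs_of_pos hx0, mul_comm]
  exact mul_le_mul_of_nonneg_right hAu hx0.le

theorem vecNorm_transpose_mulVec_le_of_matSpectralNorm_le [DecidableEq m] {A : Matrix m n ℝ}
    {c : ℝ} (hc : 0 ≤ c) (h : matSpectralNorm A ≤ c) (x : m → ℝ) :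
    vecNorm (Aᵀ *ᵥ x) ≤ c * vecNorm x := by
  have hA : ‖A‖ ≤ c := by
    refine ContinuousLinearMap.opNorm_le_bound _ hc fun z => ?_
    simpa [vecNorm_eq_norm_toLp, Matrix.toLpLin_apply] using
      vecNorm_mulVec_le_of_matSpectralNorm_le h z.ofLp
  have hAt : ‖Aᵀ‖ = ‖A‖ := by
    rw [← conjTranspose_eq_transpose_of_trivial, l2_opNorm_conjTranspose]
  calc vecNorm (Aᵀ *ᵥ x) ≤ ‖Aᵀ‖ * vecNorm x := vecNorm_mulVec_le_l2_opNorm _ x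
    _ ≤ c * vecNorm x := mul_le_mul_of_nonneg_right (hAt.trans_le hA) (vecNorm_nonneg x)

end SpectralNorm

namespace Matrix

variable {m n : Type*} [Fintype m] [Fintype n]

def IsCoerciveWith (Q : Matrix n n ℝ) (c : ℝ) : Prop :=
  ∀ x, c * vecNorm x ^ 2 ≤ x ⬝ᵥ Q *ᵥ x

namespace IsCoerciveWith

variable {Q : Matrix n n ℝ} {c : ℝ}

theorem mono (hQ : Q.IsCoerciveWith c) {c' : ℝ} (h : c' ≤ c) : Q.IsCoerciveWith c' :=
  fun x => (mul_le_mul_of_nonneg_right h (sq_nonneg _)).trans (hQ x)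

variable [DecidableEq n]

theorem isUnit_det (hc : 0 < c) (hQ : Q.IsCoerciveWith c) : IsUnit Q.det := by
  rw [isUnit_iff_ne_zero]
  intro hdet
  obtain ⟨v, hv0, hQv⟩ := exists_mulVec_eq_zero_iff.mpr hdet
  have hv : 0 < vecNorm v := (vecNorm_nonneg v).lt_of_ne' (vecNorm_eq_zero.not.mpr hv0)
  have := hQ v
  rw [hQv, dotProduct_zero] at this
  linarith [mul_pos hc (pow_pos hv 2)]

theorem vecNorm_inv_mulVec_le (hc : 0 < c) (hQ : Q.IsCoerciveWith c) (y : n → ℝ) :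
    vecNorm (Q⁻¹ *ᵥ y) ≤ c⁻¹ * vecNorm y := by
  set z := Q⁻¹ *ᵥ y
  have hQz : Q *ᵥ z = y := by
    rw [mulVec_mulVec, mul_nonsing_inv _ (hQ.isUnit_det hc), one_mulVec]
  have hz : c * vecNorm z ^ 2 ≤ vecNorm z * vecNorm y :=
    calc c * vecNorm z ^ 2 ≤ z ⬝ᵥ Q *ᵥ z := hQ z
      _ ≤ vecNorm z * vecNorm (Q *ᵥ z) :=
          (le_abs_self _).trans (abs_dotProduct_le_vecNorm_mul _ _)
      _ = vecNorm z * vecNorm y := by rw [hQz]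
  rw [le_inv_mul_iff₀ hc]
  rcases (vecNorm_nonneg z).eq_or_lt with hz0 | hz0
  · rw [← hz0, mul_zero]; exact vecNorm_nonneg y
  · nlinarith

theorem dotProduct_inv_mulVec_le (hc : 0 < c) (hQ : Q.IsCoerciveWith c) (y : n → ℝ) :
    y ⬝ᵥ Q⁻¹ *ᵥ y ≤ c⁻¹ * vecNorm y ^ 2 :=
  calc y ⬝ᵥ Q⁻¹ *ᵥ y ≤ vecNorm y * vecNorm (Q⁻¹ *ᵥ y) :=
        (le_abs_self _).trans (abs_dotProduct_le_vecNorm_mul _ _)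
    _ ≤ vecNorm y * (c⁻¹ * vecNorm y) :=
        mul_le_mul_of_nonneg_left (hQ.vecNorm_inv_mulVec_le hc y) (vecNorm_nonneg y)
    _ = c⁻¹ * vecNorm y ^ 2 := by ring

end IsCoerciveWith

variable [DecidableEq n]

theorem isCoerciveWith_of_matSpectralNorm_sub_le {D : Matrix n n ℝ} {a b : ℝ}
    (h : matSpectralNorm (D - a • 1) ≤ b) : D.IsCoerciveWith (a - b) := by
  intro x
  have hsplit : x ⬝ᵥ D *ᵥ x = x ⬝ᵥ (D - a • 1) *ᵥ x + a * vecNorm x ^ 2 := by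
    rw [sub_mulVec, dotProduct_sub, smul_mulVec, one_mulVec, dotProduct_smul, smul_eq_mul,
      dotProduct_self_eq_vecNorm_sq]
    ring
  have hpert : |x ⬝ᵥ (D - a • 1) *ᵥ x| ≤ b * vecNorm x ^ 2 :=
    calc |x ⬝ᵥ (D - a • 1) *ᵥ x| ≤ vecNorm x * vecNorm ((D - a • 1) *ᵥ x) :=
          abs_dotProduct_le_vecNorm_mul _ _
      _ ≤ vecNorm x * (b * vecNorm x) :=
          mul_le_mul_of_nonneg_left (vecNorm_mulVec_le_of_matSpectralNorm_le h x)
            (vecNorm_nonneg x)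
      _ = b * vecNorm x ^ 2 := by ring
  rw [hsplit]
  linarith [neg_abs_le (x ⬝ᵥ (D - a • 1) *ᵥ x)]

theorem IsCoerciveWith.sub_mul_inv_mul_transpose {Q : Matrix n n ℝ} {D : Matrix m m ℝ}
    {E : Matrix m n ℝ} {c d e : ℝ} (hc : 0 < c) (hQ : Q.IsCoerciveWith c)
    (hD : D.IsCoerciveWith d) (hE : ∀ x, vecNorm (Eᵀ *ᵥ x) ≤ e * vecNorm x) :
    (D - E * (Q⁻¹ * Eᵀ)).IsCoerciveWith (d - c⁻¹ * e ^ 2) := by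
  intro x
  have hquad : x ⬝ᵥ (E * (Q⁻¹ * Eᵀ)) *ᵥ x = (Eᵀ *ᵥ x) ⬝ᵥ Q⁻¹ *ᵥ (Eᵀ *ᵥ x) := by
    rw [← mulVec_mulVec, ← mulVec_mulVec, dotProduct_mulVec, ← mulVec_transpose]
  have hEx : vecNorm (Eᵀ *ᵥ x) ^ 2 ≤ e ^ 2 * vecNorm x ^ 2 := by
    rw [← mul_pow]
    exact pow_le_pow_left₀ (vecNorm_nonneg _) (hE x) 2
  have hsub : (Eᵀ *ᵥ x) ⬝ᵥ Q⁻¹ *ᵥ (Eᵀ *ᵥ x) ≤ c⁻¹ * e ^ 2 * vecNorm x ^ 2 :=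
    calc (Eᵀ *ᵥ x) ⬝ᵥ Q⁻¹ *ᵥ (Eᵀ *ᵥ x) ≤ c⁻¹ * vecNorm (Eᵀ *ᵥ x) ^ 2 :=
          hQ.dotProduct_inv_mulVec_le hc _
      _ ≤ c⁻¹ * (e ^ 2 * vecNorm x ^ 2) := by gcongr
      _ = c⁻¹ * e ^ 2 * vecNorm x ^ 2 := by ring
  rw [sub_mulVec, dotProduct_sub, hquad]
  linarith [hD x]

end Matrix

theorem le_pow_mul_of_le_mul_succ {d : ℕ → ℝ} {r : ℝ} (hr : 0 ≤ r) {k : ℕ}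
    (h : ∀ j < k, d j ≤ r * d (j + 1)) {l : ℕ} (hl : l ≤ k) : d (k - l) ≤ r ^ l * d k := by
  induction l with
  | zero => simp
  | succ l ih =>
    calc d (k - (l + 1)) ≤ r * d (k - (l + 1) + 1) := h _ (by omega)
      _ = r * d (k - l) := by rw [show k - (l + 1) + 1 = k - l by omega]
      _ ≤ r * (r ^ l * d k) := mul_le_mul_of_nonneg_left (ih (by omega)) hr
      _ = r ^ (l + 1) * d k := by ring

theorem lt_one_and_sq_eq_mul_of_eq_sub_sqrt {δ θ ε : ℝ} (hδ1 : δ < 1) (hθ0 : 0 ≤ θ)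
    (hθ : θ < (1 - δ) / 2) (hε : ε = (1 + δ) / 2 - Real.sqrt ((1 - δ) ^ 2 / 4 - θ ^ 2)) :
    ε < 1 ∧ θ ^ 2 = (ε - δ) * (1 - ε) := by
  have hdisc : 0 ≤ (1 - δ) ^ 2 / 4 - θ ^ 2 := by nlinarith
  have hsq := Real.sq_sqrt hdisc
  have hsqrt := Real.sqrt_nonneg ((1 - δ) ^ 2 / 4 - θ ^ 2)
  subst hε
  constructor
  · linarith
  · linear_combination hsq

section Streaming

variable {N : ℕ} {M : ℕ → ℕ} (A B : ∀ k : ℕ, Matrix (Fin (M k)) (Fin N) ℝ) (lam : ℕ → ℝ)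
  {κ δ θ ε : ℝ}

theorem Qmat_isCoerciveWith (hκ : 0 < κ) (hθ0 : 0 ≤ θ) (hε1 : ε < 1)
    (hθε : θ ^ 2 = (ε - δ) * (1 - ε))
    (hD : ∀ k, matSpectralNorm (Dmat A B lam k - κ • (1 : Matrix (Fin N) (Fin N) ℝ)) ≤ κ * δ)
    (hE : ∀ k, matSpectralNorm (Emat A B k) ≤ κ * θ) (k : ℕ) :
    (Qmat A B lam k).IsCoerciveWith (κ * (1 - ε)) := by
  have hc : 0 < κ * (1 - ε) := mul_pos hκ (by linarith)
  have hDk (k : ℕ) : (Dmat A B lam k).IsCoerciveWith (κ * (1 - δ)) := by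
    simpa [mul_sub] using Matrix.isCoerciveWith_of_matSpectralNorm_sub_le (hD k)
  induction k with
  | zero =>
    have hδε : δ ≤ ε := by nlinarith
    exact (hDk 0).mono (mul_le_mul_of_nonneg_left (by linarith) hκ.le)
  | succ k ih =>
    have hfix : κ * (1 - δ) - (κ * (1 - ε))⁻¹ * (κ * θ) ^ 2 = κ * (1 - ε) := by
      rw [show (κ * (1 - ε))⁻¹ * (κ * θ) ^ 2 = κ * (ε - δ) by
        rw [inv_mul_eq_iff_eq_mul₀ hc.ne']; linear_combination κ ^ 2 * hθε]
      ring
    rw [← hfix]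
    exact ih.sub_mul_inv_mul_transpose hc (hDk (k + 1))
      (vecNorm_transpose_mulVec_le_of_matSpectralNorm_le (by positivity) (hE k))

theorem vecNorm_Umat_mulVec_le (hκ : 0 < κ) (hθ0 : 0 ≤ θ) (hε1 : ε < 1)
    (hθε : θ ^ 2 = (ε - δ) * (1 - ε))
    (hD : ∀ k, matSpectralNorm (Dmat A B lam k - κ • (1 : Matrix (Fin N) (Fin N) ℝ)) ≤ κ * δ)
    (hE : ∀ k, matSpectralNorm (Emat A B k) ≤ κ * θ) (k : ℕ) (x : Fin N → ℝ) :
    vecNorm (Umat A B lam k *ᵥ x) ≤ θ / (1 - ε) * vecNorm x := by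
  have hc : 0 < κ * (1 - ε) := mul_pos hκ (by linarith)
  have hQ := Qmat_isCoerciveWith A B lam hκ hθ0 hε1 hθε hD hE k
  calc vecNorm (Umat A B lam k *ᵥ x)
        = vecNorm ((Qmat A B lam k)⁻¹ *ᵥ ((Emat A B k)ᵀ *ᵥ x)) := by rw [Umat, mulVec_mulVec]
    _ ≤ (κ * (1 - ε))⁻¹ * vecNorm ((Emat A B k)ᵀ *ᵥ x) := hQ.vecNorm_inv_mulVec_le hc _
    _ ≤ (κ * (1 - ε))⁻¹ * (κ * θ * vecNorm x) := by
        gcongr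
        exact vecNorm_transpose_mulVec_le_of_matSpectralNorm_le (by positivity) (hE k) x
    _ = θ / (1 - ε) * vecNorm x := by field_simp

variable (y : ∀ k : ℕ, Fin (M k) → ℝ)

theorem alphaEst_of_lt {j K : ℕ} (hj : j < K) :
    alphaEst A B lam y j K =
      vvec A B lam y j - Umat A B lam j *ᵥ alphaEst A B lam y (j + 1) K := by
  obtain ⟨l, hl⟩ : ∃ l, K - j = l + 1 := ⟨K - (j + 1), by omega⟩
  rw [alphaEst, alphaEst, hl, alphaAux, show K - (l + 1) = j by omega,
    show K - (j + 1) = l by omega]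

theorem alphaEst_succ_sub_alphaEst {j K : ℕ} (hj : j < K) :
    alphaEst A B lam y j (K + 1) - alphaEst A B lam y j K =
      -(Umat A B lam j *ᵥ
        (alphaEst A B lam y (j + 1) (K + 1) - alphaEst A B lam y (j + 1) K)) := by
  rw [alphaEst_of_lt A B lam y (by omega : j < K + 1), alphaEst_of_lt A B lam y hj, mulVec_sub]
  abel

end Streaming

theorem streaming_update_geometric_decay_general
    (N : ℕ) (M : ℕ → ℕ)
    (A B : ∀ k : ℕ, Matrix (Fin (M k)) (Fin N) ℝ)
    (y : ∀ k : ℕ, Fin (M k) → ℝ) (lam : ℕ → ℝ)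
    (κ δ θ : ℝ) (hκ : 1 ≤ κ) (hδ1 : δ < 1)
    (hθ0 : 0 ≤ θ) (hθ : θ < (1 - δ) / 2)
    (hD : ∀ k, matSpectralNorm (Dmat A B lam k - κ • (1 : Matrix (Fin N) (Fin N) ℝ)) ≤ κ * δ)
    (hE : ∀ k, matSpectralNorm (Emat A B k) ≤ κ * θ)
    (ε : ℝ) (hε : ε = (1 + δ) / 2 - Real.sqrt ((1 - δ) ^ 2 / 4 - θ ^ 2)) :
    ∀ K k l : ℕ, l ≤ k → k ≤ K →
      vecNorm (alphaEst A B lam y (k - l) (K + 1) - alphaEst A B lam y (k - l) K) ≤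
        (θ / (1 - ε)) ^ l *
          vecNorm (alphaEst A B lam y k (K + 1) - alphaEst A B lam y k K) := by
  obtain ⟨hε1, hθε⟩ := lt_one_and_sq_eq_mul_of_eq_sub_sqrt hδ1 hθ0 hθ hε
  intro K k l hl hk
  refine le_pow_mul_of_le_mul_succ (d := fun j => vecNorm (alphaEst A B lam y j (K + 1) -
    alphaEst A B lam y j K)) (div_nonneg hθ0 (by linarith)) (fun j hj => ?_) hl
  rw [alphaEst_succ_sub_alphaEst A B lam y (by omega), vecNorm_neg]
  exact vecNorm_Umat_mulVec_le A B lam (by linarith) hθ0 hε1 hθε hD hE j _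

/-- geometric back-propagation of the streaming least-squares updates:
under the stability hypotheses, `‖α_{k−ℓ|K+1} − α_{k−ℓ|K}‖₂ ≤ (θ/(1−ε))^ℓ ·
‖α_{k|K+1} − α_{k|K}‖₂` for all `K ≥ k ≥ ℓ ≥ 0`. -/
theorem streaming_update_geometric_decay
    (N : ℕ) (hN : 1 ≤ N) (M : ℕ → ℕ)
    (A B : ∀ k : ℕ, Matrix (Fin (M k)) (Fin N) ℝ)
    (y : ∀ k : ℕ, Fin (M k) → ℝ) (lam : ℕ → ℝ) (hlam : ∀ k, 0 ≤ lam k)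
    (κ δ θ lam0 : ℝ) (hκ : 1 ≤ κ) (hδ0 : 0 ≤ δ) (hδ1 : δ < 1)
    (hθ0 : 0 ≤ θ) (hθ : θ < (1 - δ) / 2) (hlam0 : 0 < lam0)
    (hD : ∀ k, matSpectralNorm (Dmat A B lam k - κ • (1 : Matrix (Fin N) (Fin N) ℝ)) ≤ κ * δ)
    (hE : ∀ k, matSpectralNorm (Emat A B k) ≤ κ * θ)
    (hQ' : ∀ k, κ * lam0 ≤ eigMin (Qmat' A B lam k))
    (ε : ℝ) (hε : ε = (1 + δ) / 2 - Real.sqrt ((1 - δ) ^ 2 / 4 - θ ^ 2)) :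
    ∀ K k l : ℕ, l ≤ k → k ≤ K →
      vecNorm (alphaEst A B lam y (k - l) (K + 1) - alphaEst A B lam y (k - l) K) ≤
        (θ / (1 - ε)) ^ l *
          vecNorm (alphaEst A B lam y k (K + 1) - alphaEst A B lam y k K) :=
  streaming_update_geometric_decay_general N M A B y lam κ δ θ hκ hδ1 hθ0 hθ hD hE ε hε
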